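/- Let G be a finite group and let ω : G × G → 𝕋 be a 2-cocycle (for the trivial action) whose cohomology class has order exactly n in H²(G,𝕋), i.e. ωⁿ is a coboundary and ω^m is not a coboundary for any 0 < m < n. Then there exist a natural number k ≥ 1, a function μ : G → 𝕋, and a map φ : G → U(n^k) into the group of n^k × n^k complex unitary matrices such that φ(g)·φ(h) = (ω(g,h)·μ(g)·μ(h)·μ(gh)⁻¹) · φ(gh) for all g, h ∈ G. (In other words, G admits a projective unitary representation of dimension a power of n whose lifting obstruction is the class of ω.) -/

import Mathlib

/-!
If `ωⁿ = dν`, multiplying `ω` by the coboundary of an `n`-th root of `ν⁻¹` gives a cohomologous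
cocycle with values in the `n`-th roots of unity, i.e. of the form `ZMod.toCircle ∘ w` for an
additive cocycle `w` with values in `ZMod n`. Right translation twisted by `w`,
`f ↦ (x ↦ f (x * g) + w x g)`, acts on the `n ^ |G|` functions `f : G → ZMod n` up to adding the
constant `w g h`. Subtracting a constant so that `f 1` is preserved turns it into an action, and
the subtracted constants, sent through `ZMod.toCircle`, are the entries of monomial unitary
matrices that multiply with multiplier `ZMod.toCircle ∘ w`.
-/

/-- A `Circle`-valued 2-cocycle (trivial action). -/
def IsMulTwoCocycle {G N : Type*} [Group G] [CommGroup N] (ω : G → G → N) : Prop :=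
  ∀ g h k : G, ω g h * ω (g * h) k = ω h k * ω g (h * k)

/-- A `Circle`-valued 2-coboundary (trivial action). -/
def IsMulTwoCoboundary {G N : Type*} [Group G] [CommGroup N] (ω : G → G → N) : Prop :=
  ∃ μ : G → N, ∀ g h : G, ω g h = μ g * μ h * (μ (g * h))⁻¹

lemma Circle.exists_pow_eq {n : ℕ} (hn : n ≠ 0) (z : Circle) : ∃ w : Circle, w ^ n = z :=
  ⟨Circle.exp (Complex.arg z / n), by
    rw [← Circle.exp_natCast_mul, mul_div_cancel₀ _ (Nat.cast_ne_zero.2 hn), Circle.exp_arg]⟩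

lemma Circle.star_coe_mul_coe (z : Circle) : star (z : ℂ) * z = 1 := by
  rw [Complex.star_def, ← Complex.normSq_eq_conj_mul_self, Circle.normSq_coe, Complex.ofReal_one]

lemma ZMod.exists_toCircle_eq_of_pow_eq_one {n : ℕ} [NeZero n] {z : Circle} (hz : z ^ n = 1) :
    ∃ j : ZMod n, toCircle j = z := by
  obtain ⟨j, hj⟩ := (bijective_rootsOfUnityAddChar n).2
    ⟨toUnits z, by simp [mem_rootsOfUnity, ← map_pow, hz]⟩
  exact ⟨j, congrArg (fun u : rootsOfUnity n Circle => ((u : Circleˣ) : Circle)) hj⟩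

section MulCocycle

variable {G N : Type*} [Group G] [CommGroup N] {ω ω' : G → G → N}

lemma IsMulTwoCocycle.mul (hω : IsMulTwoCocycle ω) (hω' : IsMulTwoCocycle ω') :
    IsMulTwoCocycle fun g h => ω g h * ω' g h := fun g h k => by
  rw [mul_mul_mul_comm, hω, hω', mul_mul_mul_comm]

lemma IsMulTwoCoboundary.isMulTwoCocycle (hω : IsMulTwoCoboundary ω) : IsMulTwoCocycle ω := by
  obtain ⟨μ, rfl⟩ : ∃ μ : G → N, ω = fun g h => μ g * μ h * (μ (g * h))⁻¹ :=
    hω.imp fun μ hμ => funext₂ hμ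
  intro g h k
  simp only [mul_assoc g h k]
  apply Additive.ofMul.injective
  simp only [ofMul_mul, ofMul_inv]
  abel

lemma IsMulTwoCocycle.exists_cohomologous_pow_eq_one {n : ℕ} (hω : IsMulTwoCocycle ω)
    (hn : IsMulTwoCoboundary fun g h => ω g h ^ n) (hroot : ∀ z : N, ∃ w, w ^ n = z) :
    ∃ μ : G → N, IsMulTwoCocycle (fun g h => ω g h * μ g * μ h * (μ (g * h))⁻¹) ∧
      ∀ g h, (ω g h * μ g * μ h * (μ (g * h))⁻¹) ^ n = 1 := by
  obtain ⟨ν, hν⟩ := hn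
  choose μ hμ using fun g => hroot (ν g)⁻¹
  refine ⟨μ, ?_, fun g h => ?_⟩
  · simpa only [mul_assoc] using
      hω.mul (IsMulTwoCoboundary.isMulTwoCocycle ⟨μ, fun _ _ => rfl⟩)
  · simp only [mul_pow, inv_pow, hμ, hν]
    apply Additive.ofMul.injective
    simp only [ofMul_mul, ofMul_inv, ofMul_one]
    abel

end MulCocycle

def IsAddTwoCocycle {G A : Type*} [Group G] [AddCommGroup A] (w : G → G → A) : Prop :=
  ∀ g h k : G, w g h + w (g * h) k = w h k + w g (h * k)

section TwistedShift

variable {G A : Type*} [Group G] [AddCommGroup A] {w : G → G → A}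

variable (w) in
def twistedShiftCoeff (g : G) (f : G → A) : A :=
  f g + w 1 g - f 1

variable (w) in
def twistedShift (g : G) (f : G → A) : G → A :=
  fun x => f (x * g) + w x g - twistedShiftCoeff w g f

lemma IsAddTwoCocycle.apply_one_right (hw : IsAddTwoCocycle w) (g : G) : w g 1 = w 1 1 := by
  simpa using hw g 1 1

lemma twistedShift_one (hw : IsAddTwoCocycle w) (f : G → A) : twistedShift w 1 f = f := by
  funext x
  simp only [twistedShift, twistedShiftCoeff, mul_one, hw.apply_one_right]
  abel

lemma twistedShift_twistedShift (hw : IsAddTwoCocycle w) (g h : G) (f : G → A) :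
    twistedShift w g (twistedShift w h f) = twistedShift w (g * h) f := by
  funext x
  simp only [twistedShift, twistedShiftCoeff, one_mul, mul_assoc]
  linear_combination (norm := skip) hw x g h - hw 1 g h
  simp only [one_mul]
  abel

lemma twistedShiftCoeff_twistedShift (hw : IsAddTwoCocycle w) (g h : G) (f : G → A) :
    twistedShiftCoeff w g (twistedShift w h f) + twistedShiftCoeff w h f =
      w g h + twistedShiftCoeff w (g * h) f := by
  simp only [twistedShift, twistedShiftCoeff, one_mul]
  linear_combination (norm := skip) hw 1 g h
  simp only [one_mul]
  abel

lemma twistedShift_injective (hw : IsAddTwoCocycle w) (g : G) :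
    Function.Injective (twistedShift w g) :=
  Function.LeftInverse.injective (g := twistedShift w g⁻¹) fun f => by
    rw [twistedShift_twistedShift hw, inv_mul_cancel, twistedShift_one hw]

end TwistedShift

section MonomialMatrix

variable {X R : Type*} [DecidableEq X]

def monomialMatrix [Zero R] (σ : X → X) (c : X → R) : Matrix X X R :=
  Matrix.of fun y x => if y = σ x then c x else 0

lemma smul_monomialMatrix [Semiring R] (a : R) (σ : X → X) (c : X → R) :
    a • monomialMatrix σ c = monomialMatrix σ fun x => a * c x := by
  ext y x
  simp [monomialMatrix]

lemma monomialMatrix_mul [Fintype X] [Semiring R] (σ τ : X → X) (c d : X → R) :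
    monomialMatrix σ c * monomialMatrix τ d = monomialMatrix (σ ∘ τ) fun x => c (τ x) * d x := by
  ext y x
  rw [Matrix.mul_apply, Finset.sum_eq_single (τ x)]
  · simp [monomialMatrix, ite_mul]
  · intro z _ hz
    simp [monomialMatrix, hz]
  · simp

lemma monomialMatrix_mem_unitaryGroup [Fintype X] [CommRing R] [StarRing R] {σ : X → X}
    (hσ : Function.Injective σ) {c : X → R} (hc : ∀ x, star (c x) * c x = 1) :
    monomialMatrix σ c ∈ Matrix.unitaryGroup X R := by
  rw [Matrix.mem_unitaryGroup_iff']
  ext x x'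
  rw [Matrix.mul_apply, Finset.sum_eq_single (σ x'), Matrix.one_apply]
  · by_cases hx : x = x'
    · simp [monomialMatrix, hx, hc]
    · simp [monomialMatrix, hσ.eq_iff, Ne.symm hx, hx]
  · intro y _ hy
    simp [monomialMatrix, hy]
  · simp

end MonomialMatrix

def IsProjectiveUnitaryRep {G ι : Type*} [Group G] [Fintype ι] [DecidableEq ι]
    (c : G → G → Circle) (φ : G → Matrix ι ι ℂ) : Prop :=
  (∀ g, φ g ∈ Matrix.unitaryGroup ι ℂ) ∧ ∀ g h, φ g * φ h = (c g h : ℂ) • φ (g * h)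

lemma IsProjectiveUnitaryRep.submatrix {G ι κ : Type*} [Group G] [Fintype ι] [DecidableEq ι]
    [Fintype κ] [DecidableEq κ] {c : G → G → Circle} {φ : G → Matrix ι ι ℂ}
    (hφ : IsProjectiveUnitaryRep c φ) (e : κ ≃ ι) :
    IsProjectiveUnitaryRep c fun g => (φ g).submatrix e e := by
  refine ⟨fun g => ?_, fun g h => ?_⟩
  · rw [Matrix.mem_unitaryGroup_iff', Matrix.star_eq_conjTranspose, Matrix.conjTranspose_submatrix,
      Matrix.submatrix_mul_equiv, ← Matrix.star_eq_conjTranspose,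
      (Matrix.mem_unitaryGroup_iff').1 (hφ.1 g), Matrix.submatrix_one_equiv]
  · rw [Matrix.submatrix_mul_equiv, hφ.2 g h, Matrix.submatrix_smul]
    rfl

theorem IsAddTwoCocycle.exists_isProjectiveUnitaryRep {G A : Type*} [Group G] [AddCommGroup A]
    [Finite G] [Finite A] {w : G → G → A} (hw : IsAddTwoCocycle w) (χ : AddChar A Circle) :
    ∃ φ : G → Matrix (Fin (Nat.card A ^ Nat.card G)) (Fin (Nat.card A ^ Nat.card G)) ℂ,
      IsProjectiveUnitaryRep (fun g h => χ (w g h)) φ := by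
  classical
  have := Fintype.ofFinite G
  have := Fintype.ofFinite A
  have hrep : IsProjectiveUnitaryRep (fun g h => χ (w g h))
      fun g => monomialMatrix (twistedShift w g) fun f => (χ (twistedShiftCoeff w g f) : ℂ) := by
    refine ⟨fun g => monomialMatrix_mem_unitaryGroup (twistedShift_injective hw g)
      fun _ => Circle.star_coe_mul_coe _, fun g h => ?_⟩
    rw [monomialMatrix_mul, smul_monomialMatrix]
    congr 1
    · funext f
      exact twistedShift_twistedShift hw g h f
    · funext f
      rw [← Circle.coe_mul, ← Circle.coe_mul, ← AddChar.map_add_eq_mul, ← AddChar.map_add_eq_mul,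
        twistedShiftCoeff_twistedShift hw]
  exact ⟨_, hrep.submatrix (Finite.equivFinOfCardEq Nat.card_fun).symm⟩

theorem IsMulTwoCocycle.exists_isProjectiveUnitaryRep_of_pow_eq_one {G : Type*} [Group G]
    [Finite G] {n : ℕ} [NeZero n] {ω : G → G → Circle} (hω : IsMulTwoCocycle ω)
    (hn : ∀ g h, ω g h ^ n = 1) :
    ∃ φ : G → Matrix (Fin (n ^ Nat.card G)) (Fin (n ^ Nat.card G)) ℂ,
      IsProjectiveUnitaryRep ω φ := by
  choose w hw using fun g h => ZMod.exists_toCircle_eq_of_pow_eq_one (hn g h)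
  have hw_cocycle : IsAddTwoCocycle w := fun g h k => ZMod.injective_toCircle <| by
    simpa only [AddChar.map_add_eq_mul, hw] using hω g h k
  have hrep := hw_cocycle.exists_isProjectiveUnitaryRep (G := G) ZMod.toCircle
  rw [Nat.card_zmod] at hrep
  simpa only [hw] using hrep

theorem finite_group_projective_rep_of_order_general
    {G : Type*} [Group G] [Finite G] (n : ℕ) (hnpos : 0 < n)
    (ω : G → G → Circle) (hω : IsMulTwoCocycle ω)
    (hn : IsMulTwoCoboundary (fun g h => (ω g h) ^ n)) :
    ∃ (k : ℕ) (μ : G → Circle)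
      (φ : G → Matrix (Fin (n ^ k)) (Fin (n ^ k)) ℂ),
        1 ≤ k ∧
        (∀ g : G, φ g ∈ Matrix.unitaryGroup (Fin (n ^ k)) ℂ) ∧
        (∀ g h : G,
          φ g * φ h = ((ω g h * μ g * μ h * (μ (g * h))⁻¹ : Circle) : ℂ) • φ (g * h)) := by
  have : NeZero n := ⟨hnpos.ne'⟩
  obtain ⟨μ, hcocycle, hpow⟩ :=
    hω.exists_cohomologous_pow_eq_one hn (Circle.exists_pow_eq hnpos.ne')
  obtain ⟨φ, hunitary, hmul⟩ := hcocycle.exists_isProjectiveUnitaryRep_of_pow_eq_one hpow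
  exact ⟨Nat.card G, μ, φ, Nat.card_pos, hunitary, hmul⟩

/-- if the class of a circle-valued 2-cocycle `ω` on a finite group `G` has
order exactly `n` in `H²(G, 𝕋)`, then `G` admits a projective unitary representation of
dimension a power of `n` whose lifting obstruction is the class of `ω`. -/
theorem finite_group_projective_rep_of_order
    {G : Type*} [Group G] [Finite G] (n : ℕ) (hnpos : 0 < n)
    (ω : G → G → Circle) (hω : IsMulTwoCocycle ω)
    (hn : IsMulTwoCoboundary (fun g h => (ω g h) ^ n))
    (hmin : ∀ m : ℕ, 0 < m → m < n → ¬ IsMulTwoCoboundary (fun g h => (ω g h) ^ m)) :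
    ∃ (k : ℕ) (μ : G → Circle)
      (φ : G → Matrix (Fin (n ^ k)) (Fin (n ^ k)) ℂ),
        1 ≤ k ∧
        (∀ g : G, φ g ∈ Matrix.unitaryGroup (Fin (n ^ k)) ℂ) ∧
        (∀ g h : G,
          φ g * φ h = ((ω g h * μ g * μ h * (μ (g * h))⁻¹ : Circle) : ℂ) • φ (g * h)) :=
  finite_group_projective_rep_of_order_general n hnpos ω hω hn
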